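/- arXiv:1003.2187 — 7 statements merged into one kernel-verified Lean document; each statement's English description precedes it below -/
import Mathlib

section
/- Let Cat(m) = C(2m,m)/(m+1) denote the m-th Catalan number. Let T : ℕ → ℚ be any sequence, and let d : ℕ → ℚ satisfy d(0) = 0 and, for every q ≥ 0, d(q+1) = T(q+1) + 2·Σ_{k=0}^{q} Cat(q−k)·d(k). Then for every q ≥ 0, d(q+1) = Σ_{p=0}^{q} C(2(q−p), q−p)·T(p+1). -/
/-!
Let `C` and `B` be the generating series of the Catalan numbers and of the central binomial
coefficients. Since `B = (X C)'` (as `(n + 1) Cat(n) = C(2n, n)`) and `C = 1 + X C²`,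
differentiating gives `B = 1 + 2 X C B`, i.e. `B (1 - 2 X C) = 1`. The recurrence says that
`D = ∑ d(q) X ^ q` solves `D = X S + 2 X C D` with `S = ∑ T(q+1) X ^ q`, hence `D = X S B`, whose
coefficients are the claimed convolution.
-/

open PowerSeries

namespace PowerSeries

def centralBinomSeries : ℕ⟦X⟧ := mk Nat.centralBinom

theorem centralBinomSeries_eq_derivative :
    centralBinomSeries = d⁄dX ℕ (X * catalanSeries) := by
  ext n
  rw [coeff_derivative, coeff_succ_X_mul, catalanSeries_coeff, centralBinomSeries, coeff_mk,
    ← succ_mul_catalan_eq_centralBinom, mul_comm, Nat.cast_id]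

theorem derivative_catalanSeries :
    d⁄dX ℕ catalanSeries =
      catalanSeries ^ 2 + 2 * X * catalanSeries * d⁄dX ℕ catalanSeries := by
  conv_lhs => rw [← catalanSeries_sq_mul_X_add_one]
  simp only [map_add, Derivation.map_one_eq_zero, Derivation.leibniz, Derivation.leibniz_pow,
    derivative_X, smul_eq_mul]
  ring

theorem centralBinomSeries_eq_one_add :
    centralBinomSeries = 1 + 2 * X * catalanSeries * centralBinomSeries := by
  have hB : centralBinomSeries = catalanSeries + X * d⁄dX ℕ catalanSeries := by
    rw [centralBinomSeries_eq_derivative, Derivation.leibniz, derivative_X, smul_eq_mul,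
      smul_eq_mul, mul_one, add_comm]
  calc centralBinomSeries
      = (catalanSeries ^ 2 * X + 1) +
          X * (catalanSeries ^ 2 + 2 * X * catalanSeries * d⁄dX ℕ catalanSeries) := by
        rw [← derivative_catalanSeries, catalanSeries_sq_mul_X_add_one, hB]
    _ = 1 + 2 * X * catalanSeries * centralBinomSeries := by rw [hB]; ring

end PowerSeries

theorem mk_eq_X_mul_of_catalan_recurrence {R : Type*} [CommRing R] {T d : ℕ → R} (h0 : d 0 = 0)
    (hrec : ∀ q, d (q + 1) =
      T (q + 1) + 2 * ∑ k ∈ Finset.range (q + 1), (catalan (q - k) : R) * d k) :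
    mk d = X * (mk (fun n => T (n + 1)) * map (Nat.castRingHom R) centralBinomSeries) := by
  set C := map (Nat.castRingHom R) catalanSeries
  set B := map (Nat.castRingHom R) centralBinomSeries
  have hB : B = 1 + 2 * X * C * B := by
    simpa [map_ofNat] using congrArg (map (Nat.castRingHom R)) centralBinomSeries_eq_one_add
  have hD : mk d = X * (mk (fun n => T (n + 1)) + 2 * (mk d * C)) := by
    ext (_ | q)
    · simp [h0]
    · rw [coeff_mk, hrec q, coeff_succ_X_mul, map_add, coeff_mk]
      simp [two_mul, coeff_mul, mul_comm, Finset.Nat.sum_antidiagonal_eq_sum_range_succ_mk, C]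
  linear_combination B * hD - mk d * hB

theorem choose_div_succ_eq_catalan {K : Type*} [Field K] [CharZero K] (m : ℕ) :
    ((2 * m).choose m : K) / ((m : K) + 1) = catalan m := by
  rw [div_eq_iff (Nat.cast_add_one_ne_zero m), ← Nat.centralBinom_eq_two_mul_choose,
    ← succ_mul_catalan_eq_centralBinom]
  push_cast
  ring

theorem perturbative_lemma_solution (T d : ℕ → ℚ)
    (h0 : d 0 = 0)
    (hrec : ∀ q : ℕ, d (q + 1) = T (q + 1) +
      2 * ∑ k ∈ Finset.range (q + 1),
        ((Nat.choose (2 * (q - k)) (q - k) : ℚ) / ((q - k : ℕ) + 1)) * d k) :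
    ∀ q : ℕ, d (q + 1) =
      ∑ p ∈ Finset.range (q + 1), (Nat.choose (2 * (q - p)) (q - p) : ℚ) * T (p + 1) := by
  intro q
  have hrec' (q : ℕ) : d (q + 1) =
      T (q + 1) + 2 * ∑ k ∈ Finset.range (q + 1), (catalan (q - k) : ℚ) * d k := by
    simpa only [choose_div_succ_eq_catalan] using hrec q
  have h := congrArg (coeff (q + 1)) (mk_eq_X_mul_of_catalan_recurrence h0 hrec')
  rw [coeff_mk, coeff_succ_X_mul, coeff_mul, Finset.Nat.sum_antidiagonal_eq_sum_range_succ_mk] at h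
  simpa [centralBinomSeries, Nat.centralBinom_eq_two_mul_choose, mul_comm] using h
end

section
/- Let Cat(m) = C(2m,m)/(m+1). Let T : ℕ → ℚ and let d : ℕ → ℚ satisfy d(0) = 0 and, for every q ≥ 0, d(q+1) = T(q+1) + 2·Σ_{k=0}^{q} Cat(q−k)·d(k). Then for every q ≥ 0, d(q+1) = 4·d(q) − 2·Σ_{k=1}^{q} Cat(q−k)·T(k) + T(q+1). -/
/-!
In generating functions, with `D = ∑ d q Xᵠ`, `T' = ∑_{q ≥ 1} T q Xᵠ` and `C` the Catalan series,
the recurrence reads `D = T' + 2 X C D`, i.e. `(1 - 2 X C) D = T'`. Since `X C² = C - 1`, we have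
`(1 - 2 X C)² = 1 - 4 X`, so multiplying by `1 - 2 X C` gives `(1 - 4 X) D = (1 - 2 X C) T'`,
which is the claim read off coefficientwise.
-/

open Finset PowerSeries

theorem PowerSeries.coeff_mul_eq_sum_range {R : Type*} [CommSemiring R] (φ ψ : R⟦X⟧) (n : ℕ) :
    coeff n (φ * ψ) = ∑ k ∈ range (n + 1), coeff (n - k) φ * coeff k ψ := by
  rw [mul_comm φ, coeff_mul,
    Nat.sum_antidiagonal_eq_sum_range_succ (fun i j => coeff i ψ * coeff j φ)]
  simp only [mul_comm]

@[simp]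
theorem PowerSeries.coeff_ofNat_mul {R : Type*} [Semiring R] (k : ℕ) [k.AtLeastTwo]
    (φ : R⟦X⟧) (n : ℕ) : coeff n (OfNat.ofNat k * φ) = OfNat.ofNat k * coeff n φ := by
  rw [← map_ofNat C, coeff_C_mul]

theorem PowerSeries.map_catalanSeries_sq_mul_X_add_one {R : Type*} [CommSemiring R] :
    map (Nat.castRingHom R) catalanSeries ^ 2 * X + 1 = map (Nat.castRingHom R) catalanSeries := by
  simpa using congrArg (map (Nat.castRingHom R)) catalanSeries_sq_mul_X_add_one

theorem choose_two_mul_div_succ_eq_catalan (m : ℕ) :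
    (Nat.choose (2 * m) m : ℚ) / ((m : ℕ) + 1) = catalan m := by
  rw [div_eq_iff (by positivity), ← Nat.centralBinom_eq_two_mul_choose,
    ← succ_mul_catalan_eq_centralBinom]
  push_cast
  ring

theorem Finset.sum_range_succ_ite_eq_zero {M : Type*} [AddCommMonoid M] (f : ℕ → M) (q : ℕ) :
    ∑ k ∈ range (q + 1), (if k = 0 then 0 else f k) = ∑ k ∈ Icc 1 q, f k := by
  rw [range_eq_Ico, sum_eq_sum_Ico_succ_bot (by omega), if_pos rfl, zero_add]
  exact sum_congr rfl fun k hk => if_neg (by simp at hk; omega)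

theorem eq_four_mul_add_sub_of_eq_add_two_mul {R : Type*} [CommRing R] {x c d t : R}
    (hc : c ^ 2 * x + 1 = c) (hd : d = t + 2 * (x * (c * d))) :
    d = 4 * (x * d) + t - 2 * (x * (c * t)) := by
  linear_combination (1 - 2 * x * c) * hd - 4 * x * d * hc

theorem perturbative_lemma_step1 (T d : ℕ → ℚ)
    (h0 : d 0 = 0)
    (hrec : ∀ q : ℕ, d (q + 1) = T (q + 1) +
      2 * ∑ k ∈ Finset.range (q + 1),
        ((Nat.choose (2 * (q - k)) (q - k) : ℚ) / ((q - k : ℕ) + 1)) * d k) :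
    ∀ q : ℕ, d (q + 1) = 4 * d q -
      2 * ∑ k ∈ Finset.Icc 1 q,
        ((Nat.choose (2 * (q - k)) (q - k) : ℚ) / ((q - k : ℕ) + 1)) * T k
      + T (q + 1) := by
  simp only [choose_two_mul_div_succ_eq_catalan] at hrec ⊢
  set c := map (Nat.castRingHom ℚ) catalanSeries
  set T' : ℚ⟦X⟧ := PowerSeries.mk fun k => if k = 0 then 0 else T k
  set D : ℚ⟦X⟧ := PowerSeries.mk d
  have hD : D = T' + 2 * (X * (c * D)) := by
    ext (_ | q)
    · simp [D, T', h0]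
    · rw [map_add, coeff_ofNat_mul, coeff_succ_X_mul, coeff_mul_eq_sum_range]
      simp [D, T', c, hrec q]
  intro q
  have hq := congrArg (coeff (q + 1))
    (eq_four_mul_add_sub_of_eq_add_two_mul map_catalanSeries_sq_mul_X_add_one hD)
  rw [map_sub, map_add, coeff_ofNat_mul, coeff_ofNat_mul, coeff_succ_X_mul, coeff_succ_X_mul,
    coeff_mul_eq_sum_range] at hq
  rw [← sum_range_succ_ite_eq_zero]
  simp only [coeff_mk, Nat.add_eq_zero_iff, one_ne_zero, and_false, ↓reduceIte, coeff_map,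
    catalanSeries_coeff, eq_natCast, mul_ite, mul_zero, D, T', c] at hq ⊢
  linarith
end

section
/- Let Cat(m) = C(2m,m)/(m+1). Let T : ℕ → ℚ and let d : ℕ → ℚ satisfy d(0) = 0 and, for every q ≥ 0, d(q+1) = T(q+1) + 2·Σ_{k=0}^{q} Cat(q−k)·d(k). Then for every q ≥ 0, d(q+1) = Σ_{k=1}^{q} ( 4^{q+1−k} − Σ_{s=0}^{q−k} 2·4^{s}·Cat(q−k−s) )·T(k) + T(q+1). -/
/-!
The recursion is a discrete Volterra equation whose resolvent kernel is the central binomial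
coefficient `b n = C(2n, n)`: `b 0 = 1` and `b (n + 1) = 2 ∑ Cat(n - i) b i`, hence
`d n = ∑_{k=1}^{n} b (n - k) T k`. The coefficient in the statement is `b (q + 1 - k)`, because
unrolling `b (m + 1) = 4 b m - 2 Cat(m)` gives `b m = 4^m - ∑_{s<m} 2·4^s Cat(m - 1 - s)`.
-/

open Finset

section

variable {R : Type*}

theorem eq_pow_mul_sub_sum_of_succ [CommRing R] {a f : ℕ → R} {x : R}
    (h : ∀ n, a (n + 1) = x * a n - f n) (m : ℕ) :
    a m = x ^ m * a 0 - ∑ s ∈ range m, x ^ s * f (m - 1 - s) := by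
  induction m with
  | zero => simp
  | succ m ih =>
    rw [h, ih, sum_range_succ', Nat.add_sub_cancel, Nat.sub_zero, pow_zero, one_mul, mul_sub,
      mul_sum]
    simp only [pow_succ', mul_assoc, Nat.sub_sub, Nat.add_comm 1]
    ring

theorem sum_range_mul_sum_Icc_comm [CommSemiring R] (a b T : ℕ → R) (q : ℕ) :
    ∑ k ∈ range (q + 1), a (q - k) * ∑ j ∈ Icc 1 k, b (k - j) * T j =
      ∑ j ∈ Icc 1 q, (∑ i ∈ range (q - j + 1), a (q - j - i) * b i) * T j := by
  simp only [mul_sum, sum_mul]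
  rw [sum_comm' (t' := Icc 1 q) (s' := fun j => Icc j q)
    (by intro k j; simp only [mem_range, mem_Icc]; omega)]
  refine sum_congr rfl fun j hj => ?_
  rw [mem_Icc] at hj
  rw [← Ico_add_one_right_eq_Icc, sum_Ico_eq_sum_range, show q + 1 - j = q - j + 1 by omega]
  refine sum_congr rfl fun i _ => ?_
  rw [Nat.add_sub_cancel_left, Nat.sub_sub, mul_assoc]

theorem eq_sum_Icc_of_convolution_recurrence [CommSemiring R] (a b : ℕ → R) {T d : ℕ → R}
    (hb0 : b 0 = 1) (hb : ∀ n, b (n + 1) = ∑ i ∈ range (n + 1), a (n - i) * b i)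
    (h0 : d 0 = 0) (hd : ∀ q, d (q + 1) = T (q + 1) + ∑ k ∈ range (q + 1), a (q - k) * d k)
    (n : ℕ) : d n = ∑ k ∈ Icc 1 n, b (n - k) * T k := by
  induction n using Nat.strong_induction_on with
  | _ n ih =>
    match n with
    | 0 => simpa using h0
    | q + 1 =>
      rw [hd, sum_congr rfl fun k hk => by rw [ih k (mem_range.mp hk)],
        sum_range_mul_sum_Icc_comm, sum_Icc_succ_top (by omega), Nat.sub_self, hb0, one_mul,
        add_comm]
      refine congrArg (· + T (q + 1)) (sum_congr rfl fun j hj => ?_)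
      rw [mem_Icc] at hj
      rw [show q + 1 - j = q - j + 1 by omega, hb]

end

theorem cast_choose_two_mul_div_succ_eq_catalan {K : Type*} [Field K] [CharZero K] (n : ℕ) :
    (Nat.choose (2 * n) n : K) / (n + 1) = catalan n := by
  rw [div_eq_iff n.cast_add_one_ne_zero, ← Nat.centralBinom_eq_two_mul_choose,
    ← succ_mul_catalan_eq_centralBinom]
  push_cast
  ring

theorem centralBinom_succ_add_two_mul_catalan (n : ℕ) :
    Nat.centralBinom (n + 1) + 2 * catalan n = 4 * Nat.centralBinom n := by
  have key : (n + 1) * (Nat.centralBinom (n + 1) + 2 * catalan n) =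
      (n + 1) * (4 * Nat.centralBinom n) := by
    rw [mul_add, Nat.succ_mul_centralBinom_succ, mul_left_comm, succ_mul_catalan_eq_centralBinom]
    ring
  exact Nat.eq_of_mul_eq_mul_left n.succ_pos key

/-- Since `centralBinom i = (i + 1) * catalan i`, adding the sum to its reflection `i ↦ n - i`
gives `(n + 2) * ∑ catalan i * catalan (n - i) = (n + 2) * catalan (n + 1)`. -/
theorem two_mul_sum_range_catalan_mul_centralBinom (n : ℕ) :
    2 * ∑ i ∈ range (n + 1), catalan (n - i) * Nat.centralBinom i = Nat.centralBinom (n + 1) := by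
  rw [← Nat.sum_antidiagonal_eq_sum_range_succ fun i j => catalan j * Nat.centralBinom i]
  have hsymm : 2 * ∑ p ∈ antidiagonal n, catalan p.2 * Nat.centralBinom p.1 =
      ∑ p ∈ antidiagonal n, (n + 2) * (catalan p.1 * catalan p.2) := by
    rw [two_mul]
    nth_rw 2 [← Nat.sum_antidiagonal_swap]
    rw [← sum_add_distrib]
    refine sum_congr rfl fun p hp => ?_
    rw [HasAntidiagonal.mem_antidiagonal] at hp
    simp only [Prod.fst_swap, Prod.snd_swap, ← succ_mul_catalan_eq_centralBinom, ← hp]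
    ring
  rw [hsymm, ← mul_sum, ← catalan_succ', ← succ_mul_catalan_eq_centralBinom]

theorem cast_centralBinom_eq_four_pow_sub_sum {R : Type*} [CommRing R] (m : ℕ) :
    (Nat.centralBinom m : R) =
      4 ^ m - ∑ s ∈ range m, 2 * 4 ^ s * (catalan (m - 1 - s) : R) := by
  have hstep (n : ℕ) :
      (Nat.centralBinom (n + 1) : R) = 4 * Nat.centralBinom n - 2 * catalan n := by
    have h := congrArg (Nat.cast : ℕ → R) (centralBinom_succ_add_two_mul_catalan n)
    push_cast at h
    exact eq_sub_of_add_eq h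
  simp [eq_pow_mul_sub_sum_of_succ (a := fun n => (Nat.centralBinom n : R))
    (f := fun n => 2 * (catalan n : R)) hstep m, mul_left_comm, mul_assoc]

theorem perturbative_lemma_step2 (T d : ℕ → ℚ)
    (h0 : d 0 = 0)
    (hrec : ∀ q : ℕ, d (q + 1) = T (q + 1) +
      2 * ∑ k ∈ Finset.range (q + 1),
        ((Nat.choose (2 * (q - k)) (q - k) : ℚ) / ((q - k : ℕ) + 1)) * d k) :
    ∀ q : ℕ, d (q + 1) =
      (∑ k ∈ Finset.Icc 1 q,
        ((4 : ℚ) ^ (q + 1 - k) -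
          ∑ s ∈ Finset.range (q - k + 1),
            2 * (4 : ℚ) ^ s *
              ((Nat.choose (2 * (q - k - s)) (q - k - s) : ℚ) / ((q - k - s : ℕ) + 1))) * T k)
      + T (q + 1) := by
  simp only [cast_choose_two_mul_div_succ_eq_catalan, mul_sum, ← mul_assoc] at hrec ⊢
  have hb (n : ℕ) : (Nat.centralBinom (n + 1) : ℚ) =
      ∑ i ∈ range (n + 1), 2 * (catalan (n - i) : ℚ) * Nat.centralBinom i := by
    rw [← two_mul_sum_range_catalan_mul_centralBinom]
    push_cast
    simp only [mul_sum, mul_assoc]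
  intro q
  rw [eq_sum_Icc_of_convolution_recurrence (fun n => 2 * (catalan n : ℚ))
      (fun n => (Nat.centralBinom n : ℚ)) (by simp) hb h0 hrec, sum_Icc_succ_top (by omega),
    Nat.sub_self, Nat.centralBinom_zero, Nat.cast_one, one_mul]
  refine congrArg (· + T (q + 1)) (sum_congr rfl fun k hk => ?_)
  rw [mem_Icc] at hk
  rw [cast_centralBinom_eq_four_pow_sub_sum, show q + 1 - k - 1 = q - k by omega,
    show q + 1 - k = q - k + 1 by omega]
end

section
/- Let Cat(m) = C(2m,m)/(m+1). Let d : ℕ → ℚ satisfy d(0) = 0 and, for every q ≥ 0, d(q+1) = Cat(q+1) + 2·Σ_{k=0}^{q} Cat(q−k)·d(k). Then for every q ≥ 0, d(q) = (q/(q+1))·C(2q,q). -/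
open Finset

lemma choose_eq_catalan (m : ℕ) :
    (Nat.choose (2 * m) m : ℚ) = ((m : ℚ) + 1) * (catalan m : ℚ) := by
  have h := succ_mul_catalan_eq_centralBinom m
  rw [Nat.centralBinom_eq_two_mul_choose] at h
  have := congrArg (fun n : ℕ => (n : ℚ)) h
  push_cast at this
  linarith [this]

lemma cat_div (m : ℕ) :
    (Nat.choose (2 * m) m : ℚ) / ((m : ℚ) + 1) = (catalan m : ℚ) := by
  rw [choose_eq_catalan]
  have : (m : ℚ) + 1 ≠ 0 := by positivity
  field_simp

lemma conv (n : ℕ) :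
    ∑ k ∈ Finset.range (n + 1), (catalan k : ℚ) * (catalan (n - k) : ℚ)
      = (catalan (n + 1) : ℚ) := by
  have h := catalan_succ' n
  have := congrArg (fun n : ℕ => (n : ℚ)) h
  push_cast [Finset.Nat.sum_antidiagonal_eq_sum_range_succ_mk] at this
  simpa using this.symm

lemma keysum (n : ℕ) :
    ∑ k ∈ Finset.range (n + 1), (Nat.choose (2 * k) k : ℚ) * (catalan (n - k) : ℚ)
      = ((n : ℚ) + 2) * (catalan (n + 1) : ℚ) / 2 := by
  have hrefl : ∑ k ∈ Finset.range (n + 1), (Nat.choose (2 * k) k : ℚ) * (catalan (n - k) : ℚ)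
      = ∑ k ∈ Finset.range (n + 1),
        (Nat.choose (2 * (n - k)) (n - k) : ℚ) * (catalan (n - (n - k)) : ℚ) := by
    rw [← Finset.sum_range_reflect]
    apply Finset.sum_congr rfl
    intro k hk
    simp only [Finset.mem_range] at hk
    have h1 : n + 1 - 1 - k = n - k := by omega
    have h2 : n - (n - k) = k := by omega
    rw [h1, h2]
  have key : 2 * (∑ k ∈ Finset.range (n + 1), (Nat.choose (2 * k) k : ℚ) * (catalan (n - k) : ℚ))
      = ((n : ℚ) + 2) * (catalan (n + 1) : ℚ) := by
    rw [two_mul]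
    nth_rewrite 2 [hrefl]
    rw [← Finset.sum_add_distrib]
    have : ∀ k ∈ Finset.range (n + 1),
        (Nat.choose (2 * k) k : ℚ) * (catalan (n - k) : ℚ) +
          (Nat.choose (2 * (n - k)) (n - k) : ℚ) * (catalan (n - (n - k)) : ℚ)
        = ((n : ℚ) + 2) * ((catalan k : ℚ) * (catalan (n - k) : ℚ)) := by
      intro k hk
      simp only [Finset.mem_range] at hk
      have hnk : n - (n - k) = k := by omega
      have hcast : ((n - k : ℕ) : ℚ) = (n : ℚ) - k := by
        have : (k : ℚ) ≤ n := by exact_mod_cast Nat.le_of_lt_succ hk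
        push_cast [Nat.cast_sub (by omega : k ≤ n)]; ring
      rw [hnk, choose_eq_catalan, choose_eq_catalan, hcast]
      ring
    rw [Finset.sum_congr rfl this, ← Finset.mul_sum, conv]
  linarith [key]

theorem first_order_coefficient (d : ℕ → ℚ)
    (h0 : d 0 = 0)
    (hrec : ∀ q : ℕ, d (q + 1) =
      (Nat.choose (2 * (q + 1)) (q + 1) : ℚ) / ((q + 1) + 1) +
      2 * ∑ k ∈ Finset.range (q + 1),
        ((Nat.choose (2 * (q - k)) (q - k) : ℚ) / ((q - k : ℕ) + 1)) * d k) :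
    ∀ q : ℕ, d q = ((q : ℚ) / (q + 1)) * (Nat.choose (2 * q) q : ℚ) := by
  intro q
  induction q using Nat.strong_induction_on with
  | _ q ih =>
    match q with
    | 0 => simpa using h0
    | q + 1 =>
      rw [hrec q]
      have hsum : ∑ k ∈ Finset.range (q + 1),
          ((Nat.choose (2 * (q - k)) (q - k) : ℚ) / ((q - k : ℕ) + 1)) * d k
          = ∑ k ∈ Finset.range (q + 1),
            (catalan (q - k) : ℚ) * ((Nat.choose (2 * k) k : ℚ) - (catalan k : ℚ)) := by
        apply Finset.sum_congr rfl
        intro k hk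
        simp only [Finset.mem_range] at hk
        rw [ih k (by omega), cat_div]
        congr 1
        have hk1 : (k : ℚ) + 1 ≠ 0 := by positivity
        rw [choose_eq_catalan]
        field_simp
        ring
      rw [hsum]
      have hsplit : ∑ k ∈ Finset.range (q + 1),
          (catalan (q - k) : ℚ) * ((Nat.choose (2 * k) k : ℚ) - (catalan k : ℚ))
          = ((q : ℚ) + 2) * (catalan (q + 1) : ℚ) / 2 - (catalan (q + 1) : ℚ) := by
        rw [Finset.sum_congr rfl (fun k _ => by ring :
          ∀ k ∈ Finset.range (q + 1), (catalan (q - k) : ℚ) *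
            ((Nat.choose (2 * k) k : ℚ) - (catalan k : ℚ)) =
            (Nat.choose (2 * k) k : ℚ) * (catalan (q - k) : ℚ)
              - (catalan k : ℚ) * (catalan (q - k) : ℚ))]
        rw [Finset.sum_sub_distrib, keysum, conv]
      rw [hsplit]
      have hc : (Nat.choose (2 * (q + 1)) (q + 1) : ℚ)
          = ((q : ℚ) + 2) * (catalan (q + 1) : ℚ) := by
        have := choose_eq_catalan (q + 1)
        push_cast at this ⊢
        linarith
      rw [hc]
      have hq2 : (q : ℚ) + 1 + 1 ≠ 0 := by positivity
      push_cast
      field_simp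
      ring
end

section
/- Let Cat(m) = C(2m,m)/(m+1) and let a(q) = (q/(q+1))·C(2q,q). Let b : ℕ → ℚ satisfy b(0) = 0 and, for every q ≥ 0, b(q+1) = a(q+1) + Σ_{k=0}^{q} a(k)·a(q−k) + 2·Σ_{k=0}^{q} Cat(q−k)·b(k). Then for every q ≥ 0, b(q) = (q/2)·C(2q,q). -/
open Finset

private def cb (k : ℕ) : ℚ := (Nat.choose (2 * k) k : ℚ)
private def ct (k : ℕ) : ℚ := cb k / ((k : ℚ) + 1)

private lemma cb_def (n : ℕ) : (Nat.choose (2 * n) n : ℚ) = cb n := rfl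

private lemma cb_succ (k : ℕ) : ((k : ℚ) + 1) * cb (k + 1) = 2 * (2 * (k : ℚ) + 1) * cb k := by
  have h := Nat.succ_mul_centralBinom_succ k
  rw [Nat.centralBinom_eq_two_mul_choose, Nat.centralBinom_eq_two_mul_choose] at h
  unfold cb
  exact_mod_cast h

private lemma ct_eq (k : ℕ) : ct k = (catalan k : ℚ) := by
  have h := succ_mul_catalan_eq_centralBinom k
  rw [Nat.centralBinom_eq_two_mul_choose] at h
  have h2 : (Nat.choose (2 * k) k : ℚ) = ((k : ℚ) + 1) * (catalan k : ℚ) := by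
    exact_mod_cast h.symm
  have hk : ((k : ℚ) + 1) ≠ 0 := by positivity
  unfold ct cb
  rw [h2]
  field_simp

private lemma cb_eq_ct (k : ℕ) : cb k = ((k : ℚ) + 1) * ct k := by
  have hk : ((k : ℚ) + 1) ≠ 0 := by positivity
  unfold ct
  field_simp

private lemma refl_sum (f : ℕ → ℚ) (q : ℕ) :
    ∑ k ∈ range (q + 1), f (q - k) = ∑ k ∈ range (q + 1), f k := by
  simpa using Finset.sum_range_reflect f (q + 1)

private lemma cat_conv (q : ℕ) :
    ∑ k ∈ range (q + 1), ct k * ct (q - k) = ct (q + 1) := by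
  simp_rw [ct_eq]
  have h : catalan (q + 1) = ∑ i ∈ range (q + 1), catalan i * catalan (q - i) := by
    rw [catalan_succ]
    exact (Finset.sum_range fun i => catalan i * catalan (q - i)).symm
  rw [h]
  push_cast
  rfl

private lemma two_mul_weight (g : ℕ → ℚ) (q : ℕ) :
    2 * ∑ k ∈ range (q + 1), (k : ℚ) * (g k * g (q - k)) =
      (q : ℚ) * ∑ k ∈ range (q + 1), g k * g (q - k) := by
  have h1 := refl_sum (fun k => (k : ℚ) * (g k * g (q - k))) q
  rw [two_mul]
  nth_rewrite 1 [← h1]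
  rw [← Finset.sum_add_distrib, Finset.mul_sum]
  refine Finset.sum_congr rfl fun k hk => ?_
  have hkq : k ≤ q := Nat.lt_succ_iff.mp (Finset.mem_range.mp hk)
  rw [Nat.sub_sub_self hkq, Nat.cast_sub hkq]
  ring

private lemma sumA : ∀ q : ℕ, ∑ k ∈ range (q + 1), cb k * cb (q - k) = 4 ^ q := by
  intro q
  induction q with
  | zero => norm_num [cb]
  | succ q ih =>
    have hW := two_mul_weight cb (q + 1)
    have hW2 : ∑ k ∈ range (q + 2), (k : ℚ) * (cb k * cb (q + 1 - k)) =
        (2 * (q : ℚ) + 2) * 4 ^ q := by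
      rw [Finset.sum_range_succ']
      simp only [Nat.cast_zero, zero_mul, add_zero]
      have step : ∀ k ∈ range (q + 1),
          ((k + 1 : ℕ) : ℚ) * (cb (k + 1) * cb (q + 1 - (k + 1))) =
          4 * ((k : ℚ) * (cb k * cb (q - k))) + 2 * (cb k * cb (q - k)) := by
        intro k _
        have hsub : q + 1 - (k + 1) = q - k := by omega
        rw [hsub]
        push_cast
        linear_combination cb (q - k) * cb_succ k
      rw [Finset.sum_congr rfl step, Finset.sum_add_distrib, ← Finset.mul_sum, ← Finset.mul_sum]
      have hw := two_mul_weight cb q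
      rw [ih] at hw
      linear_combination 2 * hw + 2 * ih
    rw [hW2] at hW
    have hq : ((q : ℚ) + 1) ≠ 0 := by positivity
    have hcast : (((q : ℕ) + 1 : ℕ) : ℚ) = (q : ℚ) + 1 := by push_cast; ring
    rw [hcast] at hW
    have : ((q : ℚ) + 1) * (∑ k ∈ range (q + 1 + 1), cb k * cb (q + 1 - k)) =
        ((q : ℚ) + 1) * 4 ^ (q + 1) := by linear_combination -hW
    exact mul_left_cancel₀ hq this

private lemma sumC (q : ℕ) :
    ∑ k ∈ range (q + 1), ct k * cb (q - k) = cb (q + 1) / 2 := by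
  have key : 2 * ∑ k ∈ range (q + 1), ct k * cb (q - k) = ((q : ℚ) + 2) * ct (q + 1) := by
    have h1 : ∑ k ∈ range (q + 1), ct k * cb (q - k) =
        ∑ k ∈ range (q + 1), (((q - k : ℕ) : ℚ) + 1) * (ct k * ct (q - k)) := by
      refine Finset.sum_congr rfl fun k _ => ?_
      rw [cb_eq_ct (q - k)]; ring
    have h2 := refl_sum (fun k => (((q - k : ℕ) : ℚ) + 1) * (ct k * ct (q - k))) q
    rw [h1, two_mul]
    nth_rewrite 1 [← h2]
    rw [← Finset.sum_add_distrib]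
    have h3 : ∑ k ∈ range (q + 1),
        ((((q - (q - k) : ℕ) : ℚ) + 1) * (ct (q - k) * ct (q - (q - k))) +
          (((q - k : ℕ) : ℚ) + 1) * (ct k * ct (q - k))) =
        ∑ k ∈ range (q + 1), ((q : ℚ) + 2) * (ct k * ct (q - k)) := by
      refine Finset.sum_congr rfl fun k hk => ?_
      have hkq : k ≤ q := Nat.lt_succ_iff.mp (Finset.mem_range.mp hk)
      rw [Nat.sub_sub_self hkq, Nat.cast_sub hkq]
      ring
    rw [h3, ← Finset.mul_sum, cat_conv]
  have h4 : cb (q + 1) = (((q + 1 : ℕ) : ℚ) + 1) * ct (q + 1) := cb_eq_ct (q + 1)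
  push_cast at h4
  linear_combination key / 2 - h4 / 2

private lemma sumC' (q : ℕ) :
    ∑ k ∈ range (q + 1), cb k * ct (q - k) = cb (q + 1) / 2 := by
  rw [← sumC q, ← refl_sum (fun k => ct k * cb (q - k)) q]
  refine Finset.sum_congr rfl fun k hk => ?_
  have hkq : k ≤ q := Nat.lt_succ_iff.mp (Finset.mem_range.mp hk)
  rw [Nat.sub_sub_self hkq]
  ring

private lemma sumD : ∀ q : ℕ, ∑ k ∈ range (q + 1), (k : ℚ) * (cb k * ct (q - k)) =
    ((q : ℚ) + 1) / 2 * cb (q + 1) - 4 ^ q := by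
  intro q
  induction q with
  | zero => norm_num [cb, ct]
  | succ q ih =>
    rw [Finset.sum_range_succ']
    simp only [Nat.cast_zero, zero_mul, add_zero]
    have step : ∀ k ∈ range (q + 1),
        ((k + 1 : ℕ) : ℚ) * (cb (k + 1) * ct (q + 1 - (k + 1))) =
        4 * ((k : ℚ) * (cb k * ct (q - k))) + 2 * (cb k * ct (q - k)) := by
      intro k _
      have hsub : q + 1 - (k + 1) = q - k := by omega
      rw [hsub]
      push_cast
      linear_combination ct (q - k) * cb_succ k
    rw [Finset.sum_congr rfl step, Finset.sum_add_distrib, ← Finset.mul_sum, ← Finset.mul_sum]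
    have hC := sumC' q
    have hcb := cb_succ (q + 1)
    push_cast at hcb ⊢
    linear_combination 4 * ih + 2 * hC - hcb / 2

private lemma ha (n : ℕ) :
    ((n : ℚ) / ((n : ℚ) + 1)) * (Nat.choose (2 * n) n : ℚ) = cb n - ct n := by
  have hn : ((n : ℚ) + 1) ≠ 0 := by positivity
  unfold ct cb
  field_simp
  ring

theorem second_order_g1sq_coefficient (b : ℕ → ℚ)
    (h0 : b 0 = 0)
    (hrec : ∀ q : ℕ, b (q + 1) =
      (((q + 1 : ℕ) : ℚ) / ((q + 1 : ℕ) + 1)) * (Nat.choose (2 * (q + 1)) (q + 1) : ℚ) +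
      (∑ k ∈ Finset.range (q + 1),
        (((k : ℚ) / (k + 1)) * (Nat.choose (2 * k) k : ℚ)) *
        ((((q - k : ℕ) : ℚ) / ((q - k : ℕ) + 1)) * (Nat.choose (2 * (q - k)) (q - k) : ℚ))) +
      2 * ∑ k ∈ Finset.range (q + 1),
        ((Nat.choose (2 * (q - k)) (q - k) : ℚ) / ((q - k : ℕ) + 1)) * b k) :
    ∀ q : ℕ, b q = ((q : ℚ) / 2) * (Nat.choose (2 * q) q : ℚ) := by
  intro q
  induction q using Nat.strong_induction_on with
  | _ q ih =>
    cases q with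
    | zero => simpa using h0
    | succ p =>
      rw [hrec p]
      have hS1 : (∑ k ∈ Finset.range (p + 1),
          (((k : ℚ) / (k + 1)) * (Nat.choose (2 * k) k : ℚ)) *
          ((((p - k : ℕ) : ℚ) / ((p - k : ℕ) + 1)) * (Nat.choose (2 * (p - k)) (p - k) : ℚ))) =
          4 ^ p - cb (p + 1) + ct (p + 1) := by
        calc (∑ k ∈ Finset.range (p + 1),
            (((k : ℚ) / (k + 1)) * (Nat.choose (2 * k) k : ℚ)) *
            ((((p - k : ℕ) : ℚ) / ((p - k : ℕ) + 1)) * (Nat.choose (2 * (p - k)) (p - k) : ℚ)))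
            = ∑ k ∈ Finset.range (p + 1),
              (cb k * cb (p - k) + ct k * ct (p - k) - cb k * ct (p - k) - ct k * cb (p - k)) :=
              Finset.sum_congr rfl fun k _ => by rw [ha k, ha (p - k)]; ring
          _ = (∑ k ∈ Finset.range (p + 1), cb k * cb (p - k)) +
              (∑ k ∈ Finset.range (p + 1), ct k * ct (p - k)) -
              (∑ k ∈ Finset.range (p + 1), cb k * ct (p - k)) -
              (∑ k ∈ Finset.range (p + 1), ct k * cb (p - k)) := by
              rw [Finset.sum_sub_distrib, Finset.sum_sub_distrib, Finset.sum_add_distrib]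
          _ = 4 ^ p + ct (p + 1) - cb (p + 1) / 2 - cb (p + 1) / 2 := by
              rw [sumA, cat_conv, sumC', sumC]
          _ = 4 ^ p - cb (p + 1) + ct (p + 1) := by ring
      have hS2 : (∑ k ∈ Finset.range (p + 1),
          ((Nat.choose (2 * (p - k)) (p - k) : ℚ) / ((p - k : ℕ) + 1)) * b k) =
          (1 / 2) * (((p : ℚ) + 1) / 2 * cb (p + 1) - 4 ^ p) := by
        have h1 : (∑ k ∈ Finset.range (p + 1),
            ((Nat.choose (2 * (p - k)) (p - k) : ℚ) / ((p - k : ℕ) + 1)) * b k) =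
            ∑ k ∈ Finset.range (p + 1), (1 / 2) * ((k : ℚ) * (cb k * ct (p - k))) := by
          refine Finset.sum_congr rfl fun k hk => ?_
          rw [ih k (Finset.mem_range.mp hk)]
          unfold ct cb
          ring
        rw [h1, ← Finset.mul_sum, sumD p]
      rw [hS1, hS2, ha (p + 1), cb_def (p + 1)]
      push_cast
      ring
end

section
/- Let Cat(m) = C(2m,m)/(m+1), a(q) = (q/(q+1))·C(2q,q), and c(q) = (3q/(q+2))·C(2q,q). Let h : ℕ → ℚ satisfy h(0) = 0 and, for every q ≥ 0, h(q+1) = c(q+1) + a(q+2) + 2·Σ_{k=0}^{q} a(k)·c(q−k) + 2·Σ_{k=0}^{q} Cat(q−k)·h(k). Then for every q ≥ 0, h(q) = 3q·C(2q,q). -/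
open Finset

/-!
Write `C k` for `catalan k`. Since `C(2m,m) = (m+1) C m` and `(m+2) C (m+1) = 2(2m+1) C m`, the
coefficients are `a k = k C k` and `c m = (3m+1) C m - C (m+1)`, and the claim reads
`h q = 3q(q+1) C q`. Substituting this into the recurrence, the `k²` terms cancel and what remains
are the sums `∑ k C k C (n-k)` over `k ≤ n`, which by the symmetry `k ↔ n-k` equal
`n C (n+1) / 2`.
Strong induction on `q` finishes the proof, since `h (q+1)` depends only on `h 0, …, h q`.
-/

lemma choose_two_mul_self_eq_succ_mul_catalan (m : ℕ) :
    (2 * m).choose m = (m + 1) * catalan m :=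
  (succ_mul_catalan_eq_centralBinom m).symm

lemma succ_succ_mul_catalan_succ (m : ℕ) :
    (m + 2) * catalan (m + 1) = 2 * (2 * m + 1) * catalan m := by
  refine Nat.eq_of_mul_eq_mul_left (by omega : 0 < m + 1) ?_
  have h := Nat.succ_mul_centralBinom_succ m
  rw [← succ_mul_catalan_eq_centralBinom, ← succ_mul_catalan_eq_centralBinom] at h
  linear_combination h

lemma two_mul_sum_antidiagonal_fst_mul {R : Type*} [CommSemiring R] (u : ℕ → R) (n : ℕ) :
    2 * ∑ ij ∈ antidiagonal n, (ij.1 : R) * (u ij.1 * u ij.2) =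
      n * ∑ ij ∈ antidiagonal n, u ij.1 * u ij.2 := by
  have hswap : ∑ ij ∈ antidiagonal n, (ij.1 : R) * (u ij.1 * u ij.2) =
      ∑ ij ∈ antidiagonal n, (ij.2 : R) * (u ij.1 * u ij.2) := by
    rw [← Nat.sum_antidiagonal_swap]
    exact sum_congr rfl fun ij _ => by rw [Prod.fst_swap, Prod.snd_swap, mul_comm (u _)]
  rw [two_mul]
  nth_rw 2 [hswap]
  rw [← sum_add_distrib, mul_sum]
  refine sum_congr rfl fun ij hij => ?_
  rw [← add_mul, ← Nat.cast_add, mem_antidiagonal.1 hij]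

lemma two_mul_sum_range_mul_catalan_mul_catalan {R : Type*} [CommSemiring R] (n : ℕ) :
    2 * ∑ k ∈ range (n + 1), (k : R) * ((catalan k : R) * catalan (n - k)) =
      n * catalan (n + 1) := by
  rw [← Nat.sum_antidiagonal_eq_sum_range_succ
      (fun i j => (i : R) * ((catalan i : R) * catalan j)),
    two_mul_sum_antidiagonal_fst_mul (fun i => (catalan i : R)), catalan_succ']
  push_cast
  rfl

lemma two_mul_sum_range_mul_catalan_mul_catalan_sub_succ {R : Type*} [CommRing R] (q : ℕ) :
    2 * ∑ k ∈ range (q + 1), (k : R) * ((catalan k : R) * catalan (q + 1 - k)) =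
      (q + 1) * catalan (q + 2) - 2 * (q + 1) * catalan (q + 1) := by
  have h := two_mul_sum_range_mul_catalan_mul_catalan (R := R) (q + 1)
  rw [sum_range_succ, Nat.sub_self, catalan_zero] at h
  push_cast at h
  linear_combination h

lemma third_order_convolutions_eq {R : Type*} [CommRing R] (q : ℕ) :
    2 * ∑ k ∈ range (q + 1), (k : R) * catalan k *
        ((3 * ((q - k : ℕ) : R) + 1) * catalan (q - k) - catalan (q - k + 1)) +
      2 * ∑ k ∈ range (q + 1), (catalan (q - k) : R) * (3 * k * ((k + 1) * catalan k)) =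
      ((3 * q + 4) * q + 2 * (q + 1)) * catalan (q + 1) - (q + 1) * catalan (q + 2) := by
  have hterm : ∀ k ∈ range (q + 1),
      (k : R) * catalan k *
          ((3 * ((q - k : ℕ) : R) + 1) * catalan (q - k) - catalan (q - k + 1)) +
        (catalan (q - k) : R) * (3 * k * ((k + 1) * catalan k)) =
      (3 * q + 4) * (k * ((catalan k : R) * catalan (q - k))) -
        k * ((catalan k : R) * catalan (q + 1 - k)) := by
    intro k hk
    have hkq : k ≤ q := Nat.lt_succ_iff.1 (mem_range.1 hk)
    rw [Nat.cast_sub hkq, ← Nat.sub_add_comm hkq]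
    ring
  calc _ = 2 * ∑ k ∈ range (q + 1), ((3 * q + 4) * (k * ((catalan k : R) * catalan (q - k))) -
        k * ((catalan k : R) * catalan (q + 1 - k))) := by
        rw [← sum_congr rfl hterm, sum_add_distrib, mul_add]
    _ = (3 * q + 4) * (2 * ∑ k ∈ range (q + 1), (k : R) * ((catalan k : R) * catalan (q - k))) -
        2 * ∑ k ∈ range (q + 1), (k : R) * ((catalan k : R) * catalan (q + 1 - k)) := by
        rw [sum_sub_distrib, ← mul_sum]
        ring
    _ = _ := by
        rw [two_mul_sum_range_mul_catalan_mul_catalan,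
          two_mul_sum_range_mul_catalan_mul_catalan_sub_succ]
        ring

section Field

variable {K : Type*} [Field K] [CharZero K]

lemma cast_choose_two_mul_self (m : ℕ) : ((2 * m).choose m : K) = (m + 1) * catalan m := by
  exact_mod_cast choose_two_mul_self_eq_succ_mul_catalan m

lemma choose_two_mul_self_div_succ (m : ℕ) : ((2 * m).choose m : K) / (m + 1) = catalan m := by
  rw [cast_choose_two_mul_self, mul_div_cancel_left₀ _ (Nat.cast_add_one_ne_zero m)]

lemma div_succ_mul_choose_two_mul_self (k : ℕ) :
    (k : K) / (k + 1) * (2 * k).choose k = k * catalan k := by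
  rw [div_mul_comm, choose_two_mul_self_div_succ, mul_comm]

lemma three_mul_div_add_two_mul_choose_two_mul_self (m : ℕ) :
    3 * (m : K) / (m + 2) * (2 * m).choose m = (3 * m + 1) * catalan m - catalan (m + 1) := by
  have hrec : ((m : K) + 2) * catalan (m + 1) = 2 * (2 * m + 1) * catalan m := by
    exact_mod_cast succ_succ_mul_catalan_succ m
  rw [cast_choose_two_mul_self, div_mul_eq_mul_div, div_eq_iff (by norm_cast)]
  linear_combination hrec

end Field

theorem third_order_g1g2_coefficient (h : ℕ → ℚ)
    (h0 : h 0 = 0)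
    (hrec : ∀ q : ℕ, h (q + 1) =
      (3 * ((q + 1 : ℕ) : ℚ) / ((q + 1 : ℕ) + 2)) * (Nat.choose (2 * (q + 1)) (q + 1) : ℚ) +
      (((q + 2 : ℕ) : ℚ) / ((q + 2 : ℕ) + 1)) * (Nat.choose (2 * (q + 2)) (q + 2) : ℚ) +
      2 * (∑ k ∈ Finset.range (q + 1),
        (((k : ℚ) / (k + 1)) * (Nat.choose (2 * k) k : ℚ)) *
        ((3 * ((q - k : ℕ) : ℚ) / ((q - k : ℕ) + 2)) * (Nat.choose (2 * (q - k)) (q - k) : ℚ))) +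
      2 * ∑ k ∈ Finset.range (q + 1),
        ((Nat.choose (2 * (q - k)) (q - k) : ℚ) / ((q - k : ℕ) + 1)) * h k) :
    ∀ q : ℕ, h q = 3 * (q : ℚ) * (Nat.choose (2 * q) q : ℚ) := by
  intro q
  induction q using Nat.strong_induction_on with
  | _ q ih =>
    cases q with
    | zero => simpa using h0
    | succ q =>
      have hsum : ∑ k ∈ range (q + 1),
          ((Nat.choose (2 * (q - k)) (q - k) : ℚ) / ((q - k : ℕ) + 1)) * h k =
          ∑ k ∈ range (q + 1), (catalan (q - k) : ℚ) * (3 * k * ((k + 1) * catalan k)) :=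
        sum_congr rfl fun k hk => by
          rw [ih k (mem_range.1 hk), choose_two_mul_self_div_succ, cast_choose_two_mul_self]
      rw [hrec q, hsum]
      simp only [div_succ_mul_choose_two_mul_self, three_mul_div_add_two_mul_choose_two_mul_self]
      rw [cast_choose_two_mul_self]
      push_cast
      linear_combination third_order_convolutions_eq (R := ℚ) q
end

section
/- Let Cat(m) = C(2m,m)/(m+1), a(q) = (q/(q+1))·C(2q,q), and b(q) = (q/2)·C(2q,q). Let m : ℕ → ℚ satisfy m(0) = 0 and, for every q ≥ 0, m(q+1) = b(q+1) + 2·Σ_{k=0}^{q} a(k)·b(q−k) + 2·Σ_{k=0}^{q} Cat(q−k)·m(k). Then for every q ≥ 0, m(q) = (q(q+2)/6)·C(2q,q). -/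
open Finset

def Bc (k : ℕ) : ℚ := (Nat.choose (2 * k) k : ℚ)
def Ct (k : ℕ) : ℚ := (catalan k : ℚ)

lemma Bc_succ (q : ℕ) : ((q : ℚ) + 1) * Bc (q + 1) = (4 * (q : ℚ) + 2) * Bc q := by
  have h := Nat.succ_mul_centralBinom_succ q
  simp only [Nat.centralBinom_eq_two_mul_choose] at h
  have h2 : (((q + 1) * Nat.choose (2 * (q + 1)) (q + 1) : ℕ) : ℚ)
      = ((2 * (2 * q + 1) * Nat.choose (2 * q) q : ℕ) : ℚ) := by exact_mod_cast h
  push_cast at h2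
  simp only [Bc]
  linarith [h2]

lemma Ct_eq (k : ℕ) : Bc k = ((k : ℚ) + 1) * Ct k := by
  have h := succ_mul_catalan_eq_centralBinom k
  simp only [Nat.centralBinom_eq_two_mul_choose] at h
  have h2 : (((k + 1) * catalan k : ℕ) : ℚ) = ((Nat.choose (2 * k) k : ℕ) : ℚ) := by
    exact_mod_cast h
  push_cast at h2
  simp only [Bc, Ct]
  linarith [h2]

lemma reflect (q : ℕ) (f : ℕ → ℕ → ℚ) :
    ∑ k ∈ range (q + 1), f k (q - k) = ∑ k ∈ range (q + 1), f (q - k) k := by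
  rw [← Finset.sum_range_reflect (fun k => f (q - k) k) (q + 1)]
  refine Finset.sum_congr rfl fun k hk => ?_
  have hk' : k ≤ q := Nat.lt_succ_iff.mp (Finset.mem_range.mp hk)
  simp only [Nat.add_sub_cancel]
  rw [Nat.sub_sub_self hk']

lemma half (q : ℕ) (g : ℕ → ℕ → ℚ) (hg : ∀ i j, g i j = g j i) :
    2 * ∑ k ∈ range (q + 1), (k : ℚ) * g k (q - k)
      = (q : ℚ) * ∑ k ∈ range (q + 1), g k (q - k) := by
  have h1 : ∑ k ∈ range (q + 1), ((k : ℚ) * g k (q - k))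
      = ∑ k ∈ range (q + 1), (((q - k : ℕ) : ℚ) * g (q - k) k) :=
    reflect q (fun i j => (i : ℚ) * g i j)
  rw [two_mul, Finset.mul_sum]
  nth_rewrite 2 [h1]
  rw [← Finset.sum_add_distrib]
  refine Finset.sum_congr rfl fun k hk => ?_
  have hk' : k ≤ q := Nat.lt_succ_iff.mp (Finset.mem_range.mp hk)
  rw [Nat.cast_sub hk', hg (q - k) k]
  ring

lemma convB (q : ℕ) : ∑ k ∈ range (q + 1), Bc k * Bc (q - k) = 4 ^ q := by
  induction q with
  | zero => simp [Bc]
  | succ q ih =>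
    have hBcomm : ∀ i j, Bc i * Bc j = Bc j * Bc i := fun i j => mul_comm _ _
    have h1 := half (q + 1) (fun i j => Bc i * Bc j) hBcomm
    have h2 : ∑ k ∈ range (q + 2), (k : ℚ) * (Bc k * Bc (q + 1 - k))
        = ∑ k ∈ range (q + 1), ((k : ℚ) + 1) * (Bc (k + 1) * Bc (q - k)) := by
      rw [Finset.sum_range_succ' (fun k => (k : ℚ) * (Bc k * Bc (q + 1 - k))) (q + 1)]
      simp [Nat.succ_sub_succ]
    have h3 : ∑ k ∈ range (q + 1), ((k : ℚ) + 1) * (Bc (k + 1) * Bc (q - k))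
        = ∑ k ∈ range (q + 1), (4 * (k : ℚ) + 2) * (Bc k * Bc (q - k)) := by
      refine Finset.sum_congr rfl fun k hk => ?_
      have := Bc_succ k
      calc ((k : ℚ) + 1) * (Bc (k + 1) * Bc (q - k))
          = (((k : ℚ) + 1) * Bc (k + 1)) * Bc (q - k) := by ring
        _ = ((4 * (k : ℚ) + 2) * Bc k) * Bc (q - k) := by rw [this]
        _ = (4 * (k : ℚ) + 2) * (Bc k * Bc (q - k)) := by ring
    have h4 : ∑ k ∈ range (q + 1), (4 * (k : ℚ) + 2) * (Bc k * Bc (q - k))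
        = 4 * ∑ k ∈ range (q + 1), (k : ℚ) * (Bc k * Bc (q - k))
          + 2 * ∑ k ∈ range (q + 1), Bc k * Bc (q - k) := by
      rw [Finset.mul_sum, Finset.mul_sum, ← Finset.sum_add_distrib]
      exact Finset.sum_congr rfl fun k hk => by ring
    have h5 := half q (fun i j => Bc i * Bc j) hBcomm
    have hq1 : ((q : ℚ) + 1) ≠ 0 := by positivity
    have key : ((q : ℚ) + 1) * ∑ k ∈ range (q + 2), Bc k * Bc (q + 1 - k)
        = ((q : ℚ) + 1) * 4 ^ (q + 1) := by
      push_cast at h1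
      have : 2 * ∑ k ∈ range (q + 2), (k : ℚ) * (Bc k * Bc (q + 1 - k))
          = ((q : ℚ) + 1) * ∑ k ∈ range (q + 2), Bc k * Bc (q + 1 - k) := h1
      rw [← this, h2, h3, h4, ih]
      have h6 : ∑ k ∈ range (q + 1), (k : ℚ) * (Bc k * Bc (q - k)) = (q : ℚ) * 4 ^ q / 2 := by
        rw [ih] at h5; linarith [h5]
      rw [h6]; ring
    exact mul_left_cancel₀ hq1 key

lemma convCt (q : ℕ) : ∑ k ∈ range (q + 1), Ct k * Ct (q - k) = Ct (q + 1) := by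
  have h := catalan_succ q
  have h2 : (catalan (q + 1) : ℚ) = ∑ i ∈ range (q + 1), (catalan i : ℚ) * (catalan (q - i) : ℚ) := by
    rw [h, Finset.sum_range]
    push_cast
    rfl
  simp only [Ct]
  rw [h2]

lemma convCtB (q : ℕ) : 2 * ∑ k ∈ range (q + 1), Ct k * Bc (q - k) = Bc (q + 1) := by
  have h1 : ∑ k ∈ range (q + 1), Ct k * Bc (q - k)
      = ∑ k ∈ range (q + 1), Ct k * ((((q - k : ℕ) : ℚ) + 1) * Ct (q - k)) :=
    Finset.sum_congr rfl fun k _ => by rw [← Ct_eq]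
  have h2 : ∑ k ∈ range (q + 1), Ct k * ((((q - k : ℕ) : ℚ) + 1) * Ct (q - k))
      = ∑ k ∈ range (q + 1), Ct (q - k) * (((k : ℚ) + 1) * Ct k) :=
    reflect q (fun i j => Ct i * (((j : ℚ) + 1) * Ct j))
  have h3 : ∑ k ∈ range (q + 1), Ct k * ((((q - k : ℕ) : ℚ) + 1) * Ct (q - k))
        + ∑ k ∈ range (q + 1), Ct (q - k) * (((k : ℚ) + 1) * Ct k)
      = ((q : ℚ) + 2) * ∑ k ∈ range (q + 1), Ct k * Ct (q - k) := by
    rw [← Finset.sum_add_distrib, Finset.mul_sum]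
    refine Finset.sum_congr rfl fun k hk => ?_
    have hk' : k ≤ q := Nat.lt_succ_iff.mp (Finset.mem_range.mp hk)
    rw [Nat.cast_sub hk']
    ring
  have h4 : Bc (q + 1) = (((q + 1 : ℕ) : ℚ) + 1) * Ct (q + 1) := Ct_eq (q + 1)
  rw [h1, two_mul]
  nth_rewrite 2 [h2]
  rw [h3, convCt, h4]
  push_cast
  ring

lemma convBCt (q : ℕ) : 2 * ∑ k ∈ range (q + 1), Bc k * Ct (q - k) = Bc (q + 1) := by
  have h : ∑ k ∈ range (q + 1), Bc k * Ct (q - k)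
      = ∑ k ∈ range (q + 1), Ct k * Bc (q - k) := by
    rw [reflect q (fun i j => Bc i * Ct j)]
    exact Finset.sum_congr rfl fun k _ => mul_comm _ _
  rw [h, convCtB]

lemma perTerm (q k : ℕ) (hk : k ≤ q) :
    2 * (((k : ℚ) / ((k : ℚ) + 1)) * Bc k) * ((((q - k : ℕ) : ℚ) / 2) * Bc (q - k))
      + 2 * (Bc (q - k) / (((q - k : ℕ) : ℚ) + 1)) * (((k : ℚ) * ((k : ℚ) + 2) / 6) * Bc k)
    = (2 * (q : ℚ) / 3) * (Bc k * Bc (q - k))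
      - (4 / 3) * ((k : ℚ) * (Bc k * Bc (q - k)))
      - ((q : ℚ) + 1) * (Ct k * Bc (q - k))
      + (((q : ℚ) + 1) * ((q : ℚ) + 3) / 3) * (Bc k * Ct (q - k)) := by
  have hD : ((q - k : ℕ) : ℚ) = (q : ℚ) - (k : ℚ) := by
    rw [Nat.cast_sub hk]
  rw [Ct_eq k, Ct_eq (q - k), hD]
  have h1 : (k : ℚ) + 1 ≠ 0 := by positivity
  have h2 : (q : ℚ) - (k : ℚ) + 1 ≠ 0 := by
    have : (k : ℚ) ≤ (q : ℚ) := by exact_mod_cast hk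
    intro h; linarith
  field_simp
  ring

lemma mainSum (q : ℕ) :
    ∑ k ∈ range (q + 1),
      (2 * (((k : ℚ) / ((k : ℚ) + 1)) * Bc k) * ((((q - k : ℕ) : ℚ) / 2) * Bc (q - k))
        + 2 * (Bc (q - k) / (((q - k : ℕ) : ℚ) + 1)) * (((k : ℚ) * ((k : ℚ) + 2) / 6) * Bc k))
    = (q : ℚ) * ((q : ℚ) + 1) / 6 * Bc (q + 1) := by
  have hcong : ∑ k ∈ range (q + 1),
      (2 * (((k : ℚ) / ((k : ℚ) + 1)) * Bc k) * ((((q - k : ℕ) : ℚ) / 2) * Bc (q - k))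
        + 2 * (Bc (q - k) / (((q - k : ℕ) : ℚ) + 1)) * (((k : ℚ) * ((k : ℚ) + 2) / 6) * Bc k))
      = ∑ k ∈ range (q + 1),
      ((2 * (q : ℚ) / 3) * (Bc k * Bc (q - k))
        - (4 / 3) * ((k : ℚ) * (Bc k * Bc (q - k)))
        - ((q : ℚ) + 1) * (Ct k * Bc (q - k))
        + (((q : ℚ) + 1) * ((q : ℚ) + 3) / 3) * (Bc k * Ct (q - k))) := by
    refine Finset.sum_congr rfl fun k hk => ?_
    exact perTerm q k (Nat.lt_succ_iff.mp (Finset.mem_range.mp hk))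
  rw [hcong]
  rw [Finset.sum_add_distrib, Finset.sum_sub_distrib, Finset.sum_sub_distrib,
    ← Finset.mul_sum, ← Finset.mul_sum, ← Finset.mul_sum, ← Finset.mul_sum]
  have hK : ∑ k ∈ range (q + 1), (k : ℚ) * (Bc k * Bc (q - k)) = (q : ℚ) * 4 ^ q / 2 := by
    have := half q (fun i j => Bc i * Bc j) (fun i j => mul_comm _ _)
    rw [convB] at this
    linarith
  have hCtB : ∑ k ∈ range (q + 1), Ct k * Bc (q - k) = Bc (q + 1) / 2 := by
    have := convCtB q; linarith
  have hBCt : ∑ k ∈ range (q + 1), Bc k * Ct (q - k) = Bc (q + 1) / 2 := by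
    have := convBCt q; linarith
  rw [convB, hK, hCtB, hBCt]
  ring

lemma Bc_def (k : ℕ) : Bc k = (Nat.choose (2 * k) k : ℚ) := rfl

theorem third_order_g1cubed_coefficient (m : ℕ → ℚ)
    (h0 : m 0 = 0)
    (hrec : ∀ q : ℕ, m (q + 1) =
      (((q + 1 : ℕ) : ℚ) / 2) * (Nat.choose (2 * (q + 1)) (q + 1) : ℚ) +
      2 * (∑ k ∈ Finset.range (q + 1),
        (((k : ℚ) / (k + 1)) * (Nat.choose (2 * k) k : ℚ)) *
        ((((q - k : ℕ) : ℚ) / 2) * (Nat.choose (2 * (q - k)) (q - k) : ℚ))) +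
      2 * ∑ k ∈ Finset.range (q + 1),
        ((Nat.choose (2 * (q - k)) (q - k) : ℚ) / ((q - k : ℕ) + 1)) * m k) :
    ∀ q : ℕ, m q = ((q : ℚ) * (q + 2) / 6) * (Nat.choose (2 * q) q : ℚ) := by
  intro q0
  induction q0 using Nat.strong_induction_on with
  | _ q0 ih =>
    match q0, ih with
    | 0, _ => simpa using h0
    | (q + 1), ih =>
      rw [hrec q]
      have hsum2 : ∑ k ∈ Finset.range (q + 1),
          ((Nat.choose (2 * (q - k)) (q - k) : ℚ) / ((q - k : ℕ) + 1)) * m k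
          = ∑ k ∈ Finset.range (q + 1),
          (Bc (q - k) / (((q - k : ℕ) : ℚ) + 1)) * (((k : ℚ) * ((k : ℚ) + 2) / 6) * Bc k) := by
        refine Finset.sum_congr rfl fun k hk => ?_
        rw [ih k (Finset.mem_range.mp hk)]
        simp only [Bc_def]
      rw [hsum2]
      simp only [← Bc_def]
      have hcomb : 2 * (∑ k ∈ Finset.range (q + 1),
            (((k : ℚ) / ((k : ℚ) + 1)) * Bc k) * ((((q - k : ℕ) : ℚ) / 2) * Bc (q - k)))
          + 2 * ∑ k ∈ Finset.range (q + 1),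
            (Bc (q - k) / (((q - k : ℕ) : ℚ) + 1)) * (((k : ℚ) * ((k : ℚ) + 2) / 6) * Bc k)
          = (q : ℚ) * ((q : ℚ) + 1) / 6 * Bc (q + 1) := by
        rw [← mainSum q, Finset.mul_sum, Finset.mul_sum, ← Finset.sum_add_distrib]
        exact Finset.sum_congr rfl fun k _ => by ring
      push_cast
      push_cast at hcomb
      rw [add_assoc, hcomb]
      ring
end
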